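/- Let P and Q be probability measures on a measurable space X. Then TV(P,Q) ≤ Ψ(KL(P‖Q)), where Ψ(x) = sqrt(min{x/2, 1 − exp(−x)}). That is, the total variation distance is bounded both by Pinsker's inequality sqrt(KL/2) and by the Bretagnolle–Huber bound sqrt(1 − exp(−KL)). -/

import Mathlib

open MeasureTheory

/-- Total variation distance: `sup_A (P(A) - Q(A))`. -/
noncomputable def tvDist {X : Type*} [MeasurableSpace X] (P Q : Measure X) : ℝ :=
  ⨆ A : Set X, ((P A).toReal - (Q A).toReal)

/-- Kullback–Leibler divergence `∫ log (dP/dQ) dP` (for `P ≪ Q` with integrable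
log-likelihood ratio). -/
noncomputable def klDiv {X : Type*} [MeasurableSpace X] (P Q : Measure X) : ℝ :=
  ∫ x, Real.log ((P.rnDeriv Q x).toReal) ∂P

/-- `Ψ(x) = sqrt(min{x/2, 1 - exp(-x)})`. -/
noncomputable def Psi (x : ℝ) : ℝ :=
  Real.sqrt (min (x / 2) (1 - Real.exp (-x)))

/-!
Write `g = dP/dQ` and `δ = ∫ (g - 1)⁺ dQ`. Then `TV(P, Q) ≤ δ` and `∫ |g - 1| dQ = 2δ`.

*Pinsker.* The pointwise bound `3 (t - 1)² ≤ 2 (t + 2) (t log t - t + 1)` and Cauchy–Schwarz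
applied to `|g - 1| = √((g - 1)² / (g + 2) · (g + 2))` give `(2δ)² ≤ 2 KL`.

*Bretagnolle–Huber.* Jensen for `exp` under `P` gives `exp (-KL / 2) ≤ ∫ √g dQ`, and
Cauchy–Schwarz applied to `√g = √(min g 1 · max g 1)` gives
`(∫ √g dQ)² ≤ (1 - δ) (1 + δ)`.
-/

open Real
open InformationTheory (klFun)

/- `h t = 2 (t + 2) klFun t - 3 (t - 1)²` has second derivative `4 (log t - 1 + 1 / t) ≥ 0`,
so it is convex on `[0, ∞)`; it vanishes together with its derivative at `t = 1`. -/
lemma three_mul_sq_sub_one_le_klFun {t : ℝ} (ht : 0 ≤ t) :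
    3 * (t - 1) ^ 2 ≤ 2 * (t + 2) * klFun t := by
  set h : ℝ → ℝ := fun t ↦ 2 * (t + 2) * klFun t - 3 * (t - 1) ^ 2
  set h' : ℝ → ℝ := fun t ↦ 2 * klFun t + 2 * (t + 2) * log t - 6 * (t - 1)
  have hasDerivAt_h {t : ℝ} (ht : t ≠ 0) : HasDerivAt h (h' t) t := by
    have := ((((hasDerivAt_id' t).add_const 2).const_mul 2).fun_mul
      (InformationTheory.hasDerivAt_klFun ht)).fun_sub
      ((((hasDerivAt_id' t).sub_const 1).fun_pow 2).const_mul 3)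
    refine this.congr_deriv ?_
    simp only [h']
    ring
  have hasDerivAt_h' {t : ℝ} (ht : t ≠ 0) : HasDerivAt h' (4 * (log t - (1 - t⁻¹))) t := by
    have := (((InformationTheory.hasDerivAt_klFun ht).const_mul 2).fun_add
      ((((hasDerivAt_id' t).add_const 2).const_mul 2).fun_mul (hasDerivAt_log ht))).fun_sub
      (((hasDerivAt_id' t).sub_const 1).const_mul 6)
    refine this.congr_deriv ?_
    field_simp
    ring
  have hconv : ConvexOn ℝ (Set.Ici 0) h := by
    refine convexOn_of_hasDerivWithinAt2_nonneg (f' := h')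
      (f'' := fun t ↦ 4 * (log t - (1 - t⁻¹))) (convex_Ici 0) (by fun_prop) ?_ ?_ ?_ <;>
      rw [interior_Ici] <;> intro x (hx : 0 < x)
    · exact (hasDerivAt_h hx.ne').hasDerivWithinAt
    · exact (hasDerivAt_h' hx.ne').hasDerivWithinAt
    · linarith [one_sub_inv_le_log_of_pos hx]
  have hmin : IsMinOn h (Set.Ici 0) 1 := by
    refine hconv.isMinOn_of_rightDeriv_eq_zero (by simp) ?_
    rw [(hasDerivAt_h one_ne_zero).hasDerivWithinAt.derivWithin (uniqueDiffWithinAt_Ioi 1)]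
    simp [h', InformationTheory.klFun_one]
  have := hmin (Set.mem_Ici.2 ht)
  simp [h, InformationTheory.klFun_one] at this
  linarith

section Integral

variable {α : Type*} [MeasurableSpace α] {μ : Measure α}

theorem sq_integral_sqrt_mul_le {u v : α → ℝ} (hu0 : 0 ≤ᵐ[μ] u) (hv0 : 0 ≤ᵐ[μ] v)
    (hu : Integrable u μ) (hv : Integrable v μ) :
    (∫ x, √(u x * v x) ∂μ) ^ 2 ≤ (∫ x, u x ∂μ) * ∫ x, v x ∂μ := by
  have memLp_sqrt {w : α → ℝ} (hw0 : 0 ≤ᵐ[μ] w) (hw : Integrable w μ) :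
      MemLp (fun x ↦ √(w x)) (ENNReal.ofReal 2) μ := by
    rw [ENNReal.ofReal_ofNat, memLp_two_iff_integrable_sq (by fun_prop)]
    refine hw.congr ?_
    filter_upwards [hw0] with x hx
    rw [sq_sqrt hx]
  have integral_sqrt_rpow {w : α → ℝ} (hw0 : 0 ≤ᵐ[μ] w) :
      (∫ x, √(w x) ^ (2 : ℝ) ∂μ) ^ (1 / 2 : ℝ) = √(∫ x, w x ∂μ) := by
    rw [sqrt_eq_rpow]
    congr 1
    refine integral_congr_ae ?_
    filter_upwards [hw0] with x hx
    rw [rpow_two, sq_sqrt hx]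
  have holder := integral_mul_le_Lp_mul_Lq_of_nonneg HolderConjugate.two_two
    (ae_of_all _ fun _ ↦ sqrt_nonneg _) (ae_of_all _ fun _ ↦ sqrt_nonneg _)
    (memLp_sqrt hu0 hu) (memLp_sqrt hv0 hv)
  rw [integral_sqrt_rpow hu0, integral_sqrt_rpow hv0] at holder
  have hsqrt_mul : ∫ x, √(u x * v x) ∂μ = ∫ x, √(u x) * √(v x) ∂μ := by
    refine integral_congr_ae ?_
    filter_upwards [hu0] with x hx
    rw [sqrt_mul hx]
  calc (∫ x, √(u x * v x) ∂μ) ^ 2 ≤ (√(∫ x, u x ∂μ) * √(∫ x, v x ∂μ)) ^ 2 :=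
        pow_le_pow_left₀ (integral_nonneg fun _ ↦ sqrt_nonneg _) (hsqrt_mul ▸ holder) 2
    _ = (∫ x, u x ∂μ) * ∫ x, v x ∂μ := by
        rw [mul_pow, sq_sqrt (integral_nonneg_of_ae hu0), sq_sqrt (integral_nonneg_of_ae hv0)]

variable [IsProbabilityMeasure μ] {g : α → ℝ}

lemma integral_max_one_eq (hg : Integrable g μ) :
    ∫ x, max (g x) 1 ∂μ = 1 + ∫ x, max (g x - 1) 0 ∂μ := by
  have hpos : Integrable (fun x ↦ max (g x - 1) 0) μ := (hg.sub (integrable_const 1)).pos_part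
  calc ∫ x, max (g x) 1 ∂μ = ∫ x, (1 + max (g x - 1) 0) ∂μ := by
        congr with x
        rcases le_total (g x) 1 with h | h <;> simp [h]
    _ = 1 + ∫ x, max (g x - 1) 0 ∂μ := by simp [integral_add (integrable_const 1) hpos]

lemma integral_min_one_eq (hg : Integrable g μ) (hg1 : ∫ x, g x ∂μ = 1) :
    ∫ x, min (g x) 1 ∂μ = 1 - ∫ x, max (g x - 1) 0 ∂μ := by
  have hpos : Integrable (fun x ↦ max (g x - 1) 0) μ := (hg.sub (integrable_const 1)).pos_part
  calc ∫ x, min (g x) 1 ∂μ = ∫ x, (g x - max (g x - 1) 0) ∂μ := by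
        congr with x
        rcases le_total (g x) 1 with h | h <;> simp [h]
    _ = 1 - ∫ x, max (g x - 1) 0 ∂μ := by rw [integral_sub hg hpos, hg1]

lemma integral_abs_sub_one_eq (hg : Integrable g μ) (hg1 : ∫ x, g x ∂μ = 1) :
    ∫ x, |g x - 1| ∂μ = 2 * ∫ x, max (g x - 1) 0 ∂μ := by
  have hsub : Integrable (fun x ↦ g x - 1) μ := hg.sub (integrable_const 1)
  calc ∫ x, |g x - 1| ∂μ = ∫ x, (2 * max (g x - 1) 0 - (g x - 1)) ∂μ := by
        congr with x
        rcases le_total (g x) 1 with h | h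
        · rw [abs_of_nonpos (by linarith), max_eq_right (by linarith)]; ring
        · rw [abs_of_nonneg (by linarith), max_eq_left (by linarith)]; ring
    _ = 2 * ∫ x, max (g x - 1) 0 ∂μ := by
        rw [integral_sub (hsub.pos_part.const_mul 2) hsub, integral_const_mul,
          integral_sub hg (integrable_const 1), hg1]
        simp

theorem sq_integral_abs_sub_one_le_two_mul_integral_klFun (hg0 : 0 ≤ᵐ[μ] g)
    (hg : Integrable g μ) (hg1 : ∫ x, g x ∂μ = 1)
    (hkl : Integrable (fun x ↦ klFun (g x)) μ) :
    (∫ x, |g x - 1| ∂μ) ^ 2 ≤ 2 * ∫ x, klFun (g x) ∂μ := by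
  set u : α → ℝ := fun x ↦ (g x - 1) ^ 2 / (g x + 2)
  have hu_le : ∀ᵐ x ∂μ, u x ≤ 2 / 3 * klFun (g x) := by
    filter_upwards [hg0] with x (hx : 0 ≤ g x)
    rw [div_le_iff₀ (by linarith)]
    linarith [three_mul_sq_sub_one_le_klFun hx]
  have hu0 : 0 ≤ᵐ[μ] u := by
    filter_upwards [hg0] with x (hx : 0 ≤ g x)
    exact div_nonneg (sq_nonneg _) (by linarith)
  have hu : Integrable u μ := by
    have hmeas : AEStronglyMeasurable u μ :=
      ((hg.aemeasurable.sub_const 1).pow_const 2).div (hg.aemeasurable.add_const 2)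
        |>.aestronglyMeasurable
    refine (hkl.const_mul (2 / 3)).mono' hmeas ?_
    filter_upwards [hu_le, hu0] with x hx hx0
    rwa [norm_of_nonneg hx0]
  have hv0 : 0 ≤ᵐ[μ] fun x ↦ g x + 2 := by
    filter_upwards [hg0] with x (hx : 0 ≤ g x)
    exact add_nonneg hx zero_le_two
  have hv : Integrable (fun x ↦ g x + 2) μ := hg.add (integrable_const 2)
  have hsqrt : ∫ x, √(u x * (g x + 2)) ∂μ = ∫ x, |g x - 1| ∂μ := by
    refine integral_congr_ae ?_
    filter_upwards [hg0] with x (hx : 0 ≤ g x)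
    rw [div_mul_cancel₀ _ (by linarith), sqrt_sq_eq_abs]
  have hv_int : ∫ x, (g x + 2) ∂μ = 3 := by
    rw [integral_add hg (integrable_const 2), hg1]; norm_num
  calc (∫ x, |g x - 1| ∂μ) ^ 2 ≤ (∫ x, u x ∂μ) * 3 := by
        rw [← hsqrt, ← hv_int]
        exact sq_integral_sqrt_mul_le hu0 hv0 hu hv
    _ ≤ (∫ x, 2 / 3 * klFun (g x) ∂μ) * 3 :=
        mul_le_mul_of_nonneg_right (integral_mono_ae hu (hkl.const_mul _) hu_le) zero_le_three
    _ = 2 * ∫ x, klFun (g x) ∂μ := by rw [integral_const_mul]; ring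

theorem sq_integral_sqrt_le_one_sub_sq_integral_posPart (hg0 : 0 ≤ᵐ[μ] g)
    (hg : Integrable g μ) (hg1 : ∫ x, g x ∂μ = 1) :
    (∫ x, √(g x) ∂μ) ^ 2 ≤ 1 - (∫ x, max (g x - 1) 0 ∂μ) ^ 2 := by
  have hsqrt : ∫ x, √(min (g x) 1 * max (g x) 1) ∂μ = ∫ x, √(g x) ∂μ := by
    simp_rw [min_mul_max, mul_one]
  have := sq_integral_sqrt_mul_le (μ := μ)
    (u := fun x ↦ min (g x) 1) (v := fun x ↦ max (g x) 1)
    (by filter_upwards [hg0] with x (hx : 0 ≤ g x) using le_min hx zero_le_one)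
    (ae_of_all _ fun x ↦ le_max_of_le_right zero_le_one)
    (hg.inf (integrable_const 1)) (hg.sup (integrable_const 1))
  rw [hsqrt, integral_min_one_eq hg hg1, integral_max_one_eq hg] at this
  linarith

end Integral

section RadonNikodym

variable {X : Type*} [MeasurableSpace X] {P Q : Measure X}

lemma measureReal_sub_le_integral_posPart_rnDeriv [IsFiniteMeasure P] [IsFiniteMeasure Q]
    (hac : P ≪ Q) (s : Set X) :
    P.real s - Q.real s ≤ ∫ x, max ((P.rnDeriv Q x).toReal - 1) 0 ∂Q := by
  have hg : Integrable (fun x ↦ (P.rnDeriv Q x).toReal - 1) Q :=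
    Measure.integrable_toReal_rnDeriv.sub (integrable_const 1)
  calc P.real s - Q.real s = ∫ x in s, ((P.rnDeriv Q x).toReal - 1) ∂Q := by
        rw [integral_sub Measure.integrable_toReal_rnDeriv.integrableOn
          (integrable_const 1).integrableOn, Measure.setIntegral_toReal_rnDeriv hac]
        simp
    _ ≤ ∫ x in s, max ((P.rnDeriv Q x).toReal - 1) 0 ∂Q :=
        setIntegral_mono hg.integrableOn hg.pos_part.integrableOn fun _ ↦ le_max_left _ _
    _ ≤ ∫ x, max ((P.rnDeriv Q x).toReal - 1) 0 ∂Q :=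
        setIntegral_le_integral hg.pos_part (ae_of_all _ fun _ ↦ le_max_right _ _)

lemma tvDist_le_integral_posPart_rnDeriv [IsFiniteMeasure P] [IsFiniteMeasure Q] (hac : P ≪ Q) :
    tvDist P Q ≤ ∫ x, max ((P.rnDeriv Q x).toReal - 1) 0 ∂Q :=
  ciSup_le (measureReal_sub_le_integral_posPart_rnDeriv hac)

lemma klDiv_eq_integral_klFun_rnDeriv [IsProbabilityMeasure P] [IsProbabilityMeasure Q]
    (hac : P ≪ Q) (hint : Integrable (llr P Q) P) :
    klDiv P Q = ∫ x, klFun (P.rnDeriv Q x).toReal ∂Q := by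
  rw [InformationTheory.integral_klFun_rnDeriv hac hint]
  simp [klDiv, llr]

lemma mul_exp_neg_log_div_two {t : ℝ} (ht : 0 ≤ t) : t * exp (-log t / 2) = √t := by
  rcases ht.eq_or_lt with rfl | ht
  · simp
  · rw [neg_div, ← log_sqrt ht.le, exp_neg, exp_log (sqrt_pos.2 ht), ← div_eq_mul_inv,
      div_sqrt]

lemma exp_neg_klDiv_div_two_le_integral_sqrt_rnDeriv [IsProbabilityMeasure P] [IsFiniteMeasure Q]
    (hac : P ≪ Q) (hint : Integrable (llr P Q) P) :
    exp (-klDiv P Q / 2) ≤ ∫ x, √(P.rnDeriv Q x).toReal ∂Q := by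
  have hsqrt : (fun x ↦ (P.rnDeriv Q x).toReal • exp (-llr P Q x / 2)) =
      fun x ↦ √(P.rnDeriv Q x).toReal := by
    ext x
    exact mul_exp_neg_log_div_two ENNReal.toReal_nonneg
  have hexp : Integrable (fun x ↦ exp (-llr P Q x / 2)) P := by
    rw [← integrable_rnDeriv_smul_iff hac, hsqrt]
    refine ((Measure.integrable_toReal_rnDeriv (μ := P) (ν := Q)).add (integrable_const 1)).mono'
      (Measure.measurable_rnDeriv P Q).ennreal_toReal.sqrt.aestronglyMeasurable
      (ae_of_all _ fun x ↦ ?_)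
    have hx := (P.rnDeriv Q x).toReal_nonneg
    rw [norm_of_nonneg (sqrt_nonneg _), Pi.add_apply]
    nlinarith [sq_sqrt hx, sqrt_nonneg (P.rnDeriv Q x).toReal]
  calc exp (-klDiv P Q / 2) = exp (∫ x, -llr P Q x / 2 ∂P) := by
        rw [integral_div, integral_neg]; rfl
    _ ≤ ∫ x, exp (-llr P Q x / 2) ∂P :=
        convexOn_exp.map_integral_le continuous_exp.continuousOn isClosed_univ
          (ae_of_all _ fun _ ↦ Set.mem_univ _) (hint.neg.div_const 2) hexp
    _ = ∫ x, √(P.rnDeriv Q x).toReal ∂Q := by rw [← integral_rnDeriv_smul hac, hsqrt]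

end RadonNikodym

/-- Pinsker and Bretagnolle–Huber: `TV(P,Q) ≤ Ψ(KL(P‖Q))`. -/
theorem tv_le_Psi_klDiv {X : Type*} [MeasurableSpace X] (P Q : Measure X)
    [IsProbabilityMeasure P] [IsProbabilityMeasure Q]
    (hac : P ≪ Q)
    (hint : Integrable (fun x => Real.log ((P.rnDeriv Q x).toReal)) P) :
    tvDist P Q ≤ Psi (klDiv P Q) := by
  have hg0 : 0 ≤ᵐ[Q] fun x ↦ (P.rnDeriv Q x).toReal :=
    ae_of_all _ fun _ ↦ ENNReal.toReal_nonneg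
  have hg : Integrable (fun x ↦ (P.rnDeriv Q x).toReal) Q := Measure.integrable_toReal_rnDeriv
  have hg1 : ∫ x, (P.rnDeriv Q x).toReal ∂Q = 1 := by
    simp [Measure.integral_toReal_rnDeriv hac]
  set δ := ∫ x, max ((P.rnDeriv Q x).toReal - 1) 0 ∂Q
  have pinsker : δ ^ 2 ≤ klDiv P Q / 2 := by
    have := sq_integral_abs_sub_one_le_two_mul_integral_klFun hg0 hg hg1
      ((InformationTheory.integrable_klFun_rnDeriv_iff hac).2 hint)
    rw [integral_abs_sub_one_eq hg hg1, ← klDiv_eq_integral_klFun_rnDeriv hac hint] at this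
    linarith
  have bretagnolleHuber : δ ^ 2 ≤ 1 - exp (-klDiv P Q) := by
    have hexp : exp (-klDiv P Q) = exp (-klDiv P Q / 2) ^ 2 := by
      rw [← exp_nat_mul]; ring_nf
    have hexp_le := pow_le_pow_left₀ (exp_nonneg _)
      (exp_neg_klDiv_div_two_le_integral_sqrt_rnDeriv hac hint) 2
    linarith [sq_integral_sqrt_le_one_sub_sq_integral_posPart hg0 hg hg1]
  calc tvDist P Q ≤ δ := tvDist_le_integral_posPart_rnDeriv hac
    _ ≤ Psi (klDiv P Q) := le_sqrt_of_sq_le (le_min pinsker bretagnolleHuber)
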